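/- arXiv:2111.14045 — 4 statements merged into one kernel-verified Lean document; each statement's English description precedes it below -/
import Mathlib

section
/- Let R be a polynomial ring over ℂ (a Noetherian integral domain), A ∈ R^{ℓ×k}, and M = im_R(A^T) ⊆ R^k. The transposed sequence R^{k'} ←B^T R^k ←A^T R^ℓ (with B the syzygy matrix of A) is exact if and only if R^k/M is torsion-free, and this holds if and only if either M = R^k or Ass(R^k/M) = {(0)}. -/
/-!
Over a domain `R` with fraction field `K`, `Bᵀ Aᵀ = (A B)ᵀ = 0` and `Rᵏ` is torsion-free, so
`ker Bᵀ` contains the saturation `{x | ∃ r ≠ 0, r • x ∈ im Aᵀ}` of `im Aᵀ`. Conversely,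
exactness of `B, A` survives the passage to `K`, where a rank count makes the transposed sequence
exact as well; clearing denominators then puts `ker Bᵀ` inside that saturation. So exactness of the
transposed sequence says exactly that `im Aᵀ` is saturated, i.e. that `Rᵏ / im Aᵀ` is
torsion-free. Over a Noetherian ring the zero divisors on a module form the union of its
associated primes, which gives the second equivalence.
-/

open Matrix

theorem Matrix.mul_eq_zero_of_exact {R : Type*} [CommSemiring R] {l m n : Type*} [Fintype m]
    [Fintype n] {A : Matrix l m R} {B : Matrix m n R}
    (h : Function.Exact B.mulVecLin A.mulVecLin) : A * B = 0 := by
  classical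
  refine toLin'.injective ?_
  rw [toLin'_mul, map_zero]
  exact LinearMap.ext h.apply_apply_eq_zero

theorem Matrix.exact_transpose_of_exact {K : Type*} [Field K] {l m n : Type*} [Fintype l]
    [Fintype m] [Fintype n] {A : Matrix l m K} {B : Matrix m n K}
    (h : Function.Exact B.mulVecLin A.mulVecLin) :
    Function.Exact Aᵀ.mulVecLin Bᵀ.mulVecLin := by
  have hle : LinearMap.range Aᵀ.mulVecLin ≤ LinearMap.ker Bᵀ.mulVecLin := by
    rintro _ ⟨y, rfl⟩
    simp [mul_eq_zero_of_exact h]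
  -- `dim ker Bᵀ = |m| - rank B = |m| - dim ker A = rank A = dim im Aᵀ`
  have hA := LinearMap.finrank_range_add_finrank_ker A.mulVecLin
  have hB := LinearMap.finrank_range_add_finrank_ker Bᵀ.mulVecLin
  have hAt := rank_transpose A
  have hBt := rank_transpose B
  rw [LinearMap.exact_iff.mp h] at hA
  unfold Matrix.rank at hAt hBt
  exact LinearMap.exact_iff.mpr (Submodule.eq_of_le_of_finrank_eq hle (by omega)).symm

theorem IsLocalization.exists_algebraMap_comp_eq_smul {R S : Type*} [CommRing R] [CommRing S]
    [Algebra R S] (M : Submonoid R) [IsLocalization M S] {ι : Type*} [Finite ι] (v : ι → S) :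
    ∃ b ∈ M, ∃ w : ι → R, algebraMap R S ∘ w = algebraMap R S b • v := by
  obtain ⟨b, hb⟩ := exist_integer_multiples_of_finite M v
  choose w hw using hb
  exact ⟨b, b.2, w, funext fun i => (hw i).trans (Algebra.smul_def _ _)⟩

theorem RingHom.comp_mulVec {R S : Type*} [NonAssocSemiring R] [NonAssocSemiring S] {m n : Type*}
    [Fintype n] (f : R →+* S) (M : Matrix m n R) (v : n → R) :
    f ∘ (M *ᵥ v) = M.map f *ᵥ (f ∘ v) :=
  funext (f.map_mulVec M v)

theorem Matrix.exact_map_of_exact {R K : Type*} [CommRing R] [Field K] [Algebra R K]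
    [IsFractionRing R K] {l m n : Type*} [Fintype m] [Fintype n] {A : Matrix l m R}
    {B : Matrix m n R} (h : Function.Exact B.mulVecLin A.mulVecLin) :
    Function.Exact (B.map (algebraMap R K)).mulVecLin (A.map (algebraMap R K)).mulVecLin := by
  set f := algebraMap R K
  intro v
  constructor
  · intro hv
    obtain ⟨b, hb, w, hw⟩ := IsLocalization.exists_algebraMap_comp_eq_smul (nonZeroDivisors R) v
    have hAw : A *ᵥ w = 0 := by
      refine (IsFractionRing.injective R K).comp_left (?_ : f ∘ (A *ᵥ w) = f ∘ (0 : l → R))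
      rw [f.comp_mulVec, hw, mulVec_smul, show A.map f *ᵥ v = 0 from hv, smul_zero]
      exact funext fun _ => (map_zero f).symm
    obtain ⟨u, hu⟩ := (h w).mp hAw
    refine ⟨(f b)⁻¹ • (f ∘ u), ?_⟩
    have hb0 : f b ≠ 0 := (IsLocalization.map_units K ⟨b, hb⟩).ne_zero
    simp only [mulVecLin_apply, mulVec_smul, ← f.comp_mulVec] at hu ⊢
    rw [hu, hw, smul_smul, inv_mul_cancel₀ hb0, one_smul]
  · rintro ⟨u, rfl⟩
    simp [← Matrix.map_mul, mul_eq_zero_of_exact h]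

theorem Matrix.ker_transpose_eq_comap_torsion {R : Type*} [CommRing R] [IsDomain R]
    {l m n : Type*} [Fintype l] [Fintype m] [Fintype n] {A : Matrix l m R} {B : Matrix m n R}
    (h : Function.Exact B.mulVecLin A.mulVecLin) :
    LinearMap.ker Bᵀ.mulVecLin =
      (Submodule.torsion R ((m → R) ⧸ LinearMap.range Aᵀ.mulVecLin)).comap
        (LinearMap.range Aᵀ.mulVecLin).mkQ := by
  ext x
  simp only [LinearMap.mem_ker, Submodule.mem_comap, Submodule.mem_torsion_iff,
    Submodule.mkQ_apply, Submonoid.smul_def, ← Submodule.Quotient.mk_smul,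
    Submodule.Quotient.mk_eq_zero, LinearMap.mem_range, mulVecLin_apply]
  constructor
  · intro hx
    have hf := IsFractionRing.injective R (FractionRing R)
    obtain ⟨y, hy⟩ := (exact_transpose_of_exact (exact_map_of_exact (K := FractionRing R) h)
      (algebraMap R _ ∘ x)).mp <| by
        rw [mulVecLin_apply, ← transpose_map, ← RingHom.comp_mulVec, hx]
        exact funext fun _ => map_zero _
    obtain ⟨b, hb, w, hw⟩ := IsLocalization.exists_algebraMap_comp_eq_smul (nonZeroDivisors R) y
    refine ⟨⟨b, hb⟩, w, hf.comp_left ?_⟩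
    beta_reduce
    rw [RingHom.comp_mulVec, hw, mulVec_smul, transpose_map, ← mulVecLin_apply, hy]
    ext i
    simp
  · rintro ⟨a, y, hy⟩
    have hBx : (a : R) • (Bᵀ *ᵥ x) = 0 := by
      rw [← mulVec_smul, ← hy, mulVec_mulVec, ← transpose_mul, mul_eq_zero_of_exact h,
        transpose_zero, zero_mulVec]
    exact (smul_eq_zero.mp hBx).resolve_left (nonZeroDivisors.coe_ne_zero a)

theorem Submodule.comap_mkQ_eq_self_iff {R M : Type*} [Ring R] [AddCommGroup M] [Module R M]
    {N : Submodule R M} {T : Submodule R (M ⧸ N)} : T.comap N.mkQ = N ↔ T = ⊥ := by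
  have hN : (⊥ : Submodule R (M ⧸ N)).comap N.mkQ = N := N.ker_mkQ
  rw [← (comap_injective_of_surjective N.mkQ_surjective).eq_iff, hN]

theorem associatedPrimes_subset_singleton_bot_iff {R M : Type*} [CommRing R] [IsDomain R]
    [IsNoetherianRing R] [AddCommGroup M] [Module R M] :
    associatedPrimes R M ⊆ {⊥} ↔ Submodule.torsion R M = ⊥ := by
  have hzero :
      (⋃ p ∈ associatedPrimes R M, (p : Set R)) ⊆ {0} ↔ Module.IsTorsionFree R M := by
    rw [biUnion_associatedPrimes_eq_zero_divisors, Module.isTorsionFree_iff_smul_eq_zero]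
    refine ⟨fun h r x hrx => or_iff_not_imp_right.mpr fun hx => h ⟨x, hx, hrx⟩,
      fun h r ⟨x, hx, hrx⟩ => (h r x hrx).resolve_right hx⟩
  rw [← Submodule.isTorsionFree_iff_torsion_eq_bot, ← hzero, Set.iUnion₂_subset_iff]
  simp only [Set.subset_def, Set.mem_singleton_iff, SetLike.mem_coe, Submodule.eq_bot_iff]

theorem associatedPrimes_eq_empty_iff {R M : Type*} [CommRing R] [IsNoetherianRing R]
    [AddCommGroup M] [Module R M] : associatedPrimes R M = ∅ ↔ Subsingleton M := by
  refine ⟨fun h => ?_, fun _ => associatedPrimes.eq_empty_of_subsingleton⟩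
  by_contra hM
  rw [not_subsingleton_iff_nontrivial] at hM
  exact (associatedPrimes.nonempty R M).ne_empty h

/-- Over `R = ℂ[∂1,…,∂n]`: with `B` a syzygy matrix of `A` and `M = im(Aᵀ) ⊆ R^k`, the
sequence `R^ℓ →Aᵀ R^k →Bᵀ R^{k'}` is exact iff `R^k/M` is torsion-free, which holds iff
`M = R^k` or `Ass(R^k/M) = {(0)}`. -/
theorem transpose_exact_iff_torsion_free (n : ℕ) {l k k' : ℕ}
    (A : Matrix (Fin l) (Fin k) (MvPolynomial (Fin n) ℂ))
    (B : Matrix (Fin k) (Fin k') (MvPolynomial (Fin n) ℂ))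
    (hB : Function.Exact B.mulVecLin A.mulVecLin) :
    (Function.Exact A.transpose.mulVecLin B.transpose.mulVecLin
      ↔ Submodule.torsion (MvPolynomial (Fin n) ℂ)
          ((Fin k → MvPolynomial (Fin n) ℂ) ⧸ LinearMap.range A.transpose.mulVecLin) = ⊥)
    ∧ (Submodule.torsion (MvPolynomial (Fin n) ℂ)
          ((Fin k → MvPolynomial (Fin n) ℂ) ⧸ LinearMap.range A.transpose.mulVecLin) = ⊥
      ↔ (LinearMap.range A.transpose.mulVecLin = (⊤ : Submodule (MvPolynomial (Fin n) ℂ)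
            (Fin k → MvPolynomial (Fin n) ℂ))
         ∨ associatedPrimes (MvPolynomial (Fin n) ℂ)
            ((Fin k → MvPolynomial (Fin n) ℂ) ⧸ LinearMap.range A.transpose.mulVecLin) = {⊥})) := by
  constructor
  · rw [LinearMap.exact_iff, ker_transpose_eq_comap_torsion hB, Submodule.comap_mkQ_eq_self_iff]
  · rw [← associatedPrimes_subset_singleton_bot_iff, Set.subset_singleton_iff_eq,
      associatedPrimes_eq_empty_iff, Submodule.Quotient.subsingleton_iff]
end

section
/- For the Saint-Venant setting: a pair (y, z) with y ∈ ℂ^n nonzero and z a symmetric n×n complex matrix satisfies y_i y_j z_{ab} + y_a y_b z_{ij} − y_i y_a z_{jb} − y_j y_b z_{ia} = 0 for all indices i,j,a,b if and only if all 3×3 minors of the (n+1)×(n+1) symmetric matrix with (0, y^T) as first row, y as first column, and z as the remaining block vanish. -/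
/-!
If `y k ≠ 0`, the equations `A(y) z = 0` taken at `(i, j, k, k)` solve for `z` as
`z = y vᵀ + v yᵀ` with `v = z e_k / y_k - z_kk y / (2 y_k²)`; then the augmented matrix is `a bᵀ + b aᵀ` with
`a = (0, y)`, `b = (1, v)`, which has rank at most two, so its `3 × 3` minors vanish.
Conversely, the Saint-Venant expression at `(i, j, a, b)` is the difference of the two bordered
minors on rows `(0, i, j)`, columns `(0, a, b)` and rows `(0, i, a)`, columns `(0, j, b)`.
-/

/-- The augmented `(n+1)×(n+1)` symmetric matrix with `0` in the corner, `y` as first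
row/column, and `z` as the remaining block. -/
def svAug {n : ℕ} (y : Fin n → ℂ) (z : Matrix (Fin n) (Fin n) ℂ) :
    Matrix (Fin (n + 1)) (Fin (n + 1)) ℂ :=
  Matrix.of fun r c =>
    Fin.cases (Fin.cases 0 y c) (fun i => Fin.cases (y i) (fun j => z i j) c) r

open Matrix

def IsSaintVenantSolution {ι R : Type*} [CommRing R] (y : ι → R) (z : Matrix ι ι R) : Prop :=
  ∀ i j a b, y i * y j * z a b + y a * y b * z i j - y i * y a * z j b - y j * y b * z i a = 0

theorem det_submatrix_vecMulVec_add_vecMulVec {ι R : Type*} [CommRing R] (a b c d : ι → R)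
    (r s : Fin 3 → ι) : ((vecMulVec a b + vecMulVec c d).submatrix r s).det = 0 := by
  simp only [det_fin_three, submatrix_apply, Matrix.add_apply, vecMulVec_apply]
  ring

theorem IsSaintVenantSolution.exists_eq_vecMulVec_add {ι K : Type*} [Field K] [NeZero (2 : K)]
    {y : ι → K} {z : Matrix ι ι K} (h : IsSaintVenantSolution y z) {k : ι} (hk : y k ≠ 0) :
    ∃ v, z = vecMulVec y v + vecMulVec v y := by
  refine ⟨fun i => z i k / y k - z k k * y i / (2 * y k ^ 2), ?_⟩
  ext i j
  simp only [Matrix.add_apply, vecMulVec_apply]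
  field_simp
  linear_combination 2 * h i j k k

theorem svAug_vecMulVec_add {n : ℕ} (y v : Fin n → ℂ) :
    svAug y (vecMulVec y v + vecMulVec v y) =
      vecMulVec (Fin.cons 0 y) (Fin.cons 1 v) + vecMulVec (Fin.cons 1 v) (Fin.cons 0 y) := by
  ext r c
  induction r using Fin.cases <;> induction c using Fin.cases <;> simp [svAug, vecMulVec_apply]

theorem det_svAug_submatrix_border {n : ℕ} (y : Fin n → ℂ) (z : Matrix (Fin n) (Fin n) ℂ)
    (i j a b : Fin n) :
    ((svAug y z).submatrix ![0, i.succ, j.succ] ![0, a.succ, b.succ]).det =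
      y a * y j * z i b + y b * y i * z j a - y a * y i * z j b - y b * y j * z i a := by
  simp only [det_fin_three, submatrix_apply, svAug, of_apply, cons_val_zero, cons_val_one,
    cons_val, Fin.cases_zero, Fin.cases_succ]
  ring

/-- Saint-Venant incidence: for `y ≠ 0` and symmetric `z`, the Saint-Venant equations
`A(y)z = 0` hold iff all `3×3` minors of the augmented matrix vanish. -/
theorem saint_venant_minors {n : ℕ} (y : Fin n → ℂ) (hy : y ≠ 0)
    (z : Matrix (Fin n) (Fin n) ℂ) (hz : z.IsSymm) :
    (∀ i j a b : Fin n,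
        y i * y j * z a b + y a * y b * z i j - y i * y a * z j b - y j * y b * z i a = 0)
      ↔ (∀ (r c : Fin 3 → Fin (n + 1)), ((svAug y z).submatrix r c).det = 0) := by
  constructor
  · intro h r c
    obtain ⟨k, hk⟩ := Function.ne_iff.mp hy
    obtain ⟨v, rfl⟩ := IsSaintVenantSolution.exists_eq_vecMulVec_add h hk
    rw [svAug_vecMulVec_add]
    exact det_submatrix_vecMulVec_add_vecMulVec _ _ _ _ r c
  · intro h i j a b
    have h₁ := det_svAug_submatrix_border y z i j a b
    have h₂ := det_svAug_submatrix_border y z i a j b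
    rw [h _ _] at h₁ h₂
    linear_combination h₂ - h₁ - y b * y i * hz.apply a j
end

section
/- Consider A(y) = [[y1^2, y2^2, y3^2], [−y2^2, y3^2, y1^2], [−y3^2, −y1^2, y2^2]]. Then det A(y) = y1^6 + y2^6 + y3^6 + y1^2 y2^2 y3^2 (up to sign/scalar normalization), and a nonzero z ∈ ℂ^3 lies in ker A(y) for some y ∈ ℂ^3 \ {0} if and only if z1^3 − z2^3 + z3^3 − z1 z2 z3 = 0. -/
/-!
The entries of `A(y) z` are bilinear in the vector of squares `u = (y₁², y₂², y₃²)` and in `z`,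
so `A(y) z = B(z) u` for a matrix `B(z)` linear in `z` whose determinant is the cubic
(`A(y) = pencilMatrix u`, `B(z) = flippedPencilMatrix z`).
Since every vector of `ℂ³` is a vector of squares, and `u = 0` only for `y = 0`, the kernel
condition becomes `∃ u ≠ 0, B(z) u = 0`, i.e. `det B(z) = 0`.
-/

open Matrix

theorem exists_ne_zero_pow_iff {K ι : Type*} [Field K] [IsAlgClosed K] {n : ℕ} (hn : n ≠ 0)
    (P : (ι → K) → Prop) :
    (∃ y : ι → K, y ≠ 0 ∧ P fun i => y i ^ n) ↔ ∃ u ≠ 0, P u := by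
  constructor
  · rintro ⟨y, hy, hP⟩
    refine ⟨_, fun h => hy ?_, hP⟩
    funext i
    exact pow_eq_zero_iff hn |>.mp (congrFun h i)
  · rintro ⟨u, hu, hP⟩
    choose y hy using fun i => IsAlgClosed.exists_pow_nat_eq (u i) (Nat.pos_of_ne_zero hn)
    have hyu : (fun i => y i ^ n) = u := funext hy
    refine ⟨y, ?_, hyu ▸ hP⟩
    rintro rfl
    exact hu (hyu ▸ funext fun _ => zero_pow hn)

section Pencil

variable {R : Type*} [CommRing R]

def pencilMatrix (u : Fin 3 → R) : Matrix (Fin 3) (Fin 3) R :=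
  !![u 0, u 1, u 2; -u 1, u 2, u 0; -u 2, -u 0, u 1]

def flippedPencilMatrix (z : Fin 3 → R) : Matrix (Fin 3) (Fin 3) R :=
  !![z 0, z 1, z 2; z 2, -z 0, z 1; -z 1, z 2, -z 0]

theorem pencilMatrix_mulVec (u z : Fin 3 → R) :
    pencilMatrix u *ᵥ z = flippedPencilMatrix z *ᵥ u := by
  ext i
  fin_cases i <;>
    simp [pencilMatrix, flippedPencilMatrix, mulVec, dotProduct, Fin.sum_univ_three] <;> ring

theorem det_pencilMatrix (u : Fin 3 → R) :
    (pencilMatrix u).det = u 0 ^ 3 + u 1 ^ 3 + u 2 ^ 3 + u 0 * u 1 * u 2 := by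
  simp only [pencilMatrix, det_fin_three, of_apply, cons_val', cons_val_zero, cons_val_one,
    cons_val, cons_val_fin_one]
  ring

theorem det_flippedPencilMatrix (z : Fin 3 → R) :
    (flippedPencilMatrix z).det = z 0 ^ 3 - z 1 ^ 3 + z 2 ^ 3 - z 0 * z 1 * z 2 := by
  simp only [flippedPencilMatrix, det_fin_three, of_apply, cons_val', cons_val_zero, cons_val_one,
    cons_val, cons_val_fin_one]
  ring

theorem exists_ne_zero_pencilMatrix_sq_mulVec_eq_zero_iff {K : Type*} [Field K] [IsAlgClosed K]
    (z : Fin 3 → K) :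
    (∃ y : Fin 3 → K, y ≠ 0 ∧ pencilMatrix (fun i => y i ^ 2) *ᵥ z = 0) ↔
      z 0 ^ 3 - z 1 ^ 3 + z 2 ^ 3 - z 0 * z 1 * z 2 = 0 := by
  simp only [pencilMatrix_mulVec]
  rw [exists_ne_zero_pow_iff two_ne_zero (flippedPencilMatrix z *ᵥ · = 0),
    exists_mulVec_eq_zero_iff, det_flippedPencilMatrix]

end Pencil

/-- For `A(y) = [[y₁²,y₂²,y₃²],[−y₂²,y₃²,y₁²],[−y₃²,−y₁²,y₂²]]`: the determinant is
`y₁⁶+y₂⁶+y₃⁶+y₁²y₂²y₃²`, and a nonzero `z` lies in `ker A(y)` for some nonzero `y` iff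
`z₁³ − z₂³ + z₃³ − z₁z₂z₃ = 0`. -/
theorem sextic_support_cubic_wave :
    (∀ y : Fin 3 → ℂ,
      (!![(y 0)^2, (y 1)^2, (y 2)^2;
          -(y 1)^2, (y 2)^2, (y 0)^2;
          -(y 2)^2, -(y 0)^2, (y 1)^2] : Matrix (Fin 3) (Fin 3) ℂ).det
        = (y 0)^6 + (y 1)^6 + (y 2)^6 + (y 0)^2 * (y 1)^2 * (y 2)^2)
    ∧ (∀ z : Fin 3 → ℂ, z ≠ 0 →
      ((∃ y : Fin 3 → ℂ, y ≠ 0 ∧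
          (!![(y 0)^2, (y 1)^2, (y 2)^2;
              -(y 1)^2, (y 2)^2, (y 0)^2;
              -(y 2)^2, -(y 0)^2, (y 1)^2] : Matrix (Fin 3) (Fin 3) ℂ).mulVec z = 0)
        ↔ (z 0)^3 - (z 1)^3 + (z 2)^3 - z 0 * z 1 * z 2 = 0)) := by
  refine ⟨fun y => ?_, fun z _ => exists_ne_zero_pencilMatrix_sq_mulVec_eq_zero_iff z⟩
  change (pencilMatrix fun i => y i ^ 2).det = _
  rw [det_pencilMatrix]
  ring
end

section
/- For the Cayley cubic matrix C(z) = [[z1, z2, z3, 0], [z2, z1, 0, z3], [z3, 0, z1, z2]], a nonzero z ∈ ℂ^3 satisfies rank C(z) ≤ 2 if and only if z is a scalar multiple of one of the six vectors (1,1,0), (1,−1,0), (1,0,1), (1,0,−1), (0,1,1), (0,1,−1). -/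
/-! Writing `z = (a, b, c)`, the four maximal minors of `C(z)` are `a (a² - b² - c²)`,
`b (a² - b² + c²)`, `c (c² - a² - b²)` and `-2abc`. If they vanish, one coordinate is zero, and the
remaining two cubics force the other two coordinates to agree up to sign. Conversely, at each of the
six points two rows of `C(z)` agree up to sign, so the rows are dependent. -/

open Matrix

namespace Matrix

variable {m n K : Type*} [Field K] [Fintype m] [Fintype n]

theorem det_submatrix_eq_zero_of_rank_lt [DecidableEq m] {A : Matrix m n K}
    (h : A.rank < Fintype.card m) (f : m → n) : (A.submatrix id f).det = 0 := by
  by_contra hdet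
  have hfull := rank_of_det_ne_zero hdet
  have hle := A.rank_submatrix_le id f
  omega

theorem rank_lt_card_height_of_vecMul_eq_zero {A : Matrix m n K} {w : m → K}
    (hw : w ≠ 0) (h : w ᵥ* A = 0) : A.rank < Fintype.card m := by
  have hdep : ¬LinearIndependent K A.row := by
    rw [Fintype.not_linearIndependent_iff]
    exact ⟨w, by rwa [vecMul_eq_sum] at h, Function.ne_iff.mp hw⟩
  rw [linearIndependent_iff_card_eq_finrank_span] at hdep
  rw [rank_eq_finrank_span_row]
  exact lt_of_le_of_ne (finrank_range_le_card _) (Ne.symm hdep)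

end Matrix

def cayleyMatrix {R : Type*} [Zero R] (z : Fin 3 → R) : Matrix (Fin 3) (Fin 4) R :=
  !![z 0, z 1, z 2, 0;
     z 1, z 0, 0, z 2;
     z 2, 0, z 0, z 1]

def IsCayleyNode {R : Type*} [Ring R] (z : Fin 3 → R) : Prop :=
  ∃ c : R, c ≠ 0 ∧
    (z = c • ![1, 1, 0] ∨ z = c • ![1, -1, 0] ∨ z = c • ![1, 0, 1] ∨
     z = c • ![1, 0, -1] ∨ z = c • ![0, 1, 1] ∨ z = c • ![0, 1, -1])

theorem cayleyMatrix_minors {R : Type*} [CommRing R] (z : Fin 3 → R) :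
    ((cayleyMatrix z).submatrix id ![0, 1, 2]).det = z 0 * (z 0 ^ 2 - z 1 ^ 2 - z 2 ^ 2) ∧
    ((cayleyMatrix z).submatrix id ![0, 1, 3]).det = z 1 * (z 0 ^ 2 - z 1 ^ 2 + z 2 ^ 2) ∧
    ((cayleyMatrix z).submatrix id ![0, 2, 3]).det = z 2 * (z 2 ^ 2 - z 0 ^ 2 - z 1 ^ 2) ∧
    ((cayleyMatrix z).submatrix id ![1, 2, 3]).det = -2 * (z 0 * z 1 * z 2) := by
  refine ⟨?_, ?_, ?_, ?_⟩ <;> simp [cayleyMatrix, det_fin_three] <;> ring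

section

variable {R : Type*} [CommRing R] [NoZeroDivisors R]

theorem ne_zero_and_eq_or_eq_neg_of_cubics {u v : R} (huv : ¬(u = 0 ∧ v = 0))
    (hu : u * (u ^ 2 - v ^ 2) = 0) (hv : v * (v ^ 2 - u ^ 2) = 0) : u ≠ 0 ∧ (v = u ∨ v = -u) := by
  have hu0 : u ≠ 0 := by
    rintro rfl
    exact huv ⟨rfl, pow_eq_zero_iff three_ne_zero |>.mp (by linear_combination hv)⟩
  refine ⟨hu0, sq_eq_sq_iff_eq_or_eq_neg.mp ?_⟩
  linear_combination -(mul_eq_zero.mp hu).resolve_left hu0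

theorem isCayleyNode_of_minors {z : Fin 3 → R} (hz : z ≠ 0)
    (h012 : z 0 * (z 0 ^ 2 - z 1 ^ 2 - z 2 ^ 2) = 0)
    (h013 : z 1 * (z 0 ^ 2 - z 1 ^ 2 + z 2 ^ 2) = 0)
    (h023 : z 2 * (z 2 ^ 2 - z 0 ^ 2 - z 1 ^ 2) = 0)
    (h123 : z 0 * z 1 * z 2 = 0) : IsCayleyNode z := by
  have hz' : ¬(z 0 = 0 ∧ z 1 = 0 ∧ z 2 = 0) := fun ⟨h0, h1, h2⟩ =>
    hz (by ext i; fin_cases i <;> assumption)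
  rcases mul_eq_zero.mp h123 with h | hc
  rcases mul_eq_zero.mp h with ha | hb
  · obtain ⟨hb, hc⟩ := ne_zero_and_eq_or_eq_neg_of_cubics (u := z 1) (v := z 2) (by tauto)
      (by linear_combination -h013 + z 1 * z 0 * ha) (by linear_combination h023 + z 2 * z 0 * ha)
    refine ⟨z 1, hb, ?_⟩
    rcases hc with hc | hc <;> simp [funext_iff, Fin.forall_fin_succ, ha, hc]
  · obtain ⟨ha, hc⟩ := ne_zero_and_eq_or_eq_neg_of_cubics (u := z 0) (v := z 2) (by tauto)
      (by linear_combination h012 + z 0 * z 1 * hb) (by linear_combination h023 + z 2 * z 1 * hb)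
    refine ⟨z 0, ha, ?_⟩
    rcases hc with hc | hc <;> simp [funext_iff, Fin.forall_fin_succ, hb, hc]
  · obtain ⟨ha, hb⟩ := ne_zero_and_eq_or_eq_neg_of_cubics (u := z 0) (v := z 1) (by tauto)
      (by linear_combination h012 + z 0 * z 2 * hc) (by linear_combination -h013 + z 1 * z 2 * hc)
    refine ⟨z 0, ha, ?_⟩
    rcases hb with hb | hb <;> simp [funext_iff, Fin.forall_fin_succ, hb, hc]

end

section

variable {K : Type*} [Field K]

theorem isCayleyNode_of_rank_cayleyMatrix_le_two (h2 : (2 : K) ≠ 0) {z : Fin 3 → K} (hz : z ≠ 0)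
    (h : (cayleyMatrix z).rank ≤ 2) : IsCayleyNode z := by
  have hminor :=
    det_submatrix_eq_zero_of_rank_lt (A := cayleyMatrix z) (by simpa using Nat.lt_succ_of_le h)
  obtain ⟨h012, h013, h023, h123⟩ := cayleyMatrix_minors z
  rw [hminor] at h012 h013 h023 h123
  exact isCayleyNode_of_minors hz h012.symm h013.symm h023.symm (by simpa [h2] using h123.symm)

theorem IsCayleyNode.rank_cayleyMatrix_le_two {z : Fin 3 → K} (hz : IsCayleyNode z) :
    (cayleyMatrix z).rank ≤ 2 := by
  suffices ∃ w : Fin 3 → K, w ≠ 0 ∧ w ᵥ* cayleyMatrix z = 0 by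
    obtain ⟨w, hw, hwz⟩ := this
    simpa using Nat.le_of_lt_succ (rank_lt_card_height_of_vecMul_eq_zero hw hwz)
  obtain ⟨c, -, rfl | rfl | rfl | rfl | rfl | rfl⟩ := hz <;>
    [refine ⟨![1, -1, 0], ?_⟩; refine ⟨![1, 1, 0], ?_⟩; refine ⟨![1, 0, -1], ?_⟩;
      refine ⟨![1, 0, 1], ?_⟩; refine ⟨![0, 1, -1], ?_⟩; refine ⟨![0, 1, 1], ?_⟩] <;>
    exact ⟨by simp [funext_iff, Fin.forall_fin_succ],
      by ext j; fin_cases j <;> simp [cayleyMatrix, vecMul, dotProduct, Fin.sum_univ_succ]⟩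

end

/-- For the Cayley cubic matrix `C(z)`, a nonzero `z ∈ ℂ³` satisfies `rank C(z) ≤ 2` iff
`z` is a nonzero scalar multiple of one of the six points `(1,±1,0),(1,0,±1),(0,1,±1)`. -/
theorem cayley_rank_drop (z : Fin 3 → ℂ) (hz : z ≠ 0) :
    (!![z 0, z 1, z 2, 0;
        z 1, z 0, 0, z 2;
        z 2, 0, z 0, z 1] : Matrix (Fin 3) (Fin 4) ℂ).rank ≤ 2
      ↔ ∃ c : ℂ, c ≠ 0 ∧
          (z = c • ![1, 1, 0] ∨ z = c • ![1, -1, 0] ∨ z = c • ![1, 0, 1] ∨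
           z = c • ![1, 0, -1] ∨ z = c • ![0, 1, 1] ∨ z = c • ![0, 1, -1]) :=
  ⟨isCayleyNode_of_rank_cayleyMatrix_le_two two_ne_zero hz, IsCayleyNode.rank_cayleyMatrix_le_two⟩
end
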